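/- arXiv:2405.18310 — 2 statements merged into one kernel-verified Lean document; each statement's English description precedes it below -/
import Mathlib

section
/- In the free algebra k⟨x,y,z⟩ modulo the two-sided ideal generated by x² + y² + z², xz + yx + zy, and xy + zx + yz, the elements x + y + z and yx − yz + zy − z² are both nonzero, but their product is zero. Hence this quotient algebra is not a domain. -/
open FreeAlgebra

/-- The two-sided-ideal relations `x² + y² + z²`, `xz + yx + zy`, `xy + zx + yz`
in the free algebra `k⟨x,y,z⟩`, where `x, y, z` are the generators `ι k 0, ι k 1, ι k 2`. -/
inductive rel4 (k : Type) [Field k] : FreeAlgebra k (Fin 3) → FreeAlgebra k (Fin 3) → Prop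
  | r1 : rel4 k (ι k 0 * ι k 0 + ι k 1 * ι k 1 + ι k 2 * ι k 2) 0
  | r2 : rel4 k (ι k 0 * ι k 2 + ι k 1 * ι k 0 + ι k 2 * ι k 1) 0
  | r3 : rel4 k (ι k 0 * ι k 1 + ι k 2 * ι k 0 + ι k 1 * ι k 2) 0

section stmt4Aux

variable (k : Type) [Field k]

/-- Matrix representation of the relations: `x ↦ E₁₂ + E₂₃`. -/
def stmt4X : Matrix (Fin 3) (Fin 3) k := !![0,1,0; 0,0,1; 0,0,0]
/-- `y ↦ E₁₂`. -/
def stmt4Y : Matrix (Fin 3) (Fin 3) k := !![0,1,0; 0,0,0; 0,0,0]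
/-- `z ↦ E₁₂ - E₂₃`. -/
def stmt4Z : Matrix (Fin 3) (Fin 3) k := !![0,1,0; 0,0,-1; 0,0,0]

/-- The representation map out of the free algebra. -/
noncomputable def stmt4f : FreeAlgebra k (Fin 3) →ₐ[k] Matrix (Fin 3) (Fin 3) k :=
  FreeAlgebra.lift k ![stmt4X k, stmt4Y k, stmt4Z k]

lemma stmt4f_x : stmt4f k (ι k 0) = stmt4X k := by simp [stmt4f]
lemma stmt4f_y : stmt4f k (ι k 1) = stmt4Y k := by simp [stmt4f]
lemma stmt4f_z : stmt4f k (ι k 2) = stmt4Z k := by simp [stmt4f]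

lemma stmt4_rel1 : stmt4X k * stmt4X k + stmt4Y k * stmt4Y k + stmt4Z k * stmt4Z k = 0 := by
  simp only [stmt4X, stmt4Y, stmt4Z, Matrix.mul_fin_three]
  norm_num
  ext i j
  fin_cases i <;> fin_cases j <;> simp [Matrix.vecHead, Matrix.vecTail]

lemma stmt4_rel2 : stmt4X k * stmt4Z k + stmt4Y k * stmt4X k + stmt4Z k * stmt4Y k = 0 := by
  simp only [stmt4X, stmt4Y, stmt4Z, Matrix.mul_fin_three]
  norm_num
  ext i j
  fin_cases i <;> fin_cases j <;> simp [Matrix.vecHead, Matrix.vecTail]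

lemma stmt4_rel3 : stmt4X k * stmt4Y k + stmt4Z k * stmt4X k + stmt4Y k * stmt4Z k = 0 := by
  simp only [stmt4X, stmt4Y, stmt4Z, Matrix.mul_fin_three]
  norm_num
  ext i j
  fin_cases i <;> fin_cases j <;> simp [Matrix.vecHead, Matrix.vecTail]

lemma stmt4f_rel : ∀ ⦃a b⦄, rel4 k a b → (stmt4f k).toRingHom a = (stmt4f k).toRingHom b := by
  rintro a b (_|_|_) <;>
    simp only [AlgHom.toRingHom_eq_coe, RingHom.coe_coe, map_add, map_mul, map_zero,
      stmt4f_x, stmt4f_y, stmt4f_z, stmt4_rel1, stmt4_rel2, stmt4_rel3]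

/-- The induced map on the quotient. -/
noncomputable def stmt4F : RingQuot (rel4 k) →+* Matrix (Fin 3) (Fin 3) k :=
  RingQuot.lift ⟨(stmt4f k).toRingHom, stmt4f_rel k⟩

lemma stmt4F_mk (a : FreeAlgebra k (Fin 3)) :
    stmt4F k (RingQuot.mkRingHom (rel4 k) a) = stmt4f k a := by
  rw [stmt4F, RingQuot.lift_mkRingHom_apply]
  rfl

end stmt4Aux

/-- In `k⟨x,y,z⟩/(x² + y² + z², xz + yx + zy, xy + zx + yz)`
(with `char k = 0`), the elements `x + y + z` and `yx − yz + zy − z²` are both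
nonzero, but their product is zero.  Hence the quotient algebra is not a domain. -/
theorem stmt4 (k : Type) [Field k] [CharZero k] :
    ((RingQuot.mkRingHom (rel4 k)) (ι k 0) + (RingQuot.mkRingHom (rel4 k)) (ι k 1) +
        (RingQuot.mkRingHom (rel4 k)) (ι k 2) ≠ 0) ∧
    ((RingQuot.mkRingHom (rel4 k)) (ι k 1) * (RingQuot.mkRingHom (rel4 k)) (ι k 0) -
        (RingQuot.mkRingHom (rel4 k)) (ι k 1) * (RingQuot.mkRingHom (rel4 k)) (ι k 2) +
        (RingQuot.mkRingHom (rel4 k)) (ι k 2) * (RingQuot.mkRingHom (rel4 k)) (ι k 1) -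
        (RingQuot.mkRingHom (rel4 k)) (ι k 2) * (RingQuot.mkRingHom (rel4 k)) (ι k 2) ≠ 0) ∧
    (((RingQuot.mkRingHom (rel4 k)) (ι k 0) + (RingQuot.mkRingHom (rel4 k)) (ι k 1) +
        (RingQuot.mkRingHom (rel4 k)) (ι k 2)) *
      ((RingQuot.mkRingHom (rel4 k)) (ι k 1) * (RingQuot.mkRingHom (rel4 k)) (ι k 0) -
        (RingQuot.mkRingHom (rel4 k)) (ι k 1) * (RingQuot.mkRingHom (rel4 k)) (ι k 2) +
        (RingQuot.mkRingHom (rel4 k)) (ι k 2) * (RingQuot.mkRingHom (rel4 k)) (ι k 1) -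
        (RingQuot.mkRingHom (rel4 k)) (ι k 2) * (RingQuot.mkRingHom (rel4 k)) (ι k 2)) = 0) ∧
    ¬ IsDomain (RingQuot (rel4 k)) := by
  set A := (RingQuot.mkRingHom (rel4 k)) (ι k 0) with hA
  set B := (RingQuot.mkRingHom (rel4 k)) (ι k 1) with hB
  set C := (RingQuot.mkRingHom (rel4 k)) (ι k 2) with hC
  have H1 : A * A + B * B + C * C = 0 := by
    have := RingQuot.mkRingHom_rel (rel4.r1 (k := k))
    simpa [map_add, map_mul, ← hA, ← hB, ← hC] using this
  have H2 : A * C + B * A + C * B = 0 := by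
    have := RingQuot.mkRingHom_rel (rel4.r2 (k := k))
    simpa [map_add, map_mul, ← hA, ← hB, ← hC] using this
  have H3 : A * B + C * A + B * C = 0 := by
    have := RingQuot.mkRingHom_rel (rel4.r3 (k := k))
    simpa [map_add, map_mul, ← hA, ← hB, ← hC] using this
  have hprod : (A + B + C) * (B * A - B * C + C * B - C * C) = 0 := by
    have key : (A + B + C) * (B * A - B * C + C * B - C * C) =
        (A + B + C) * (A * C + B * A + C * B) -
          ((A * A + B * B + C * C) + (A * C + B * A + C * B) + (A * B + C * A + B * C)) * C := by
      simp only [mul_add, add_mul, mul_sub, sub_mul, mul_assoc]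
      abel
    rw [key, H1, H2, H3]
    simp
  have h1 : A + B + C ≠ 0 := by
    intro h0
    have h0' := congrArg (stmt4F k) h0
    simp only [map_add, map_zero, hA, hB, hC, stmt4F_mk, stmt4f_x, stmt4f_y, stmt4f_z] at h0'
    have h0'' := congrFun (congrFun h0' 0) 1
    simp [stmt4X, stmt4Y, stmt4Z, Matrix.add_apply] at h0''
    norm_num at h0''
  have h2 : B * A - B * C + C * B - C * C ≠ 0 := by
    intro h0
    have h0' := congrArg (stmt4F k) h0
    simp only [map_add, map_sub, map_mul, map_zero, hA, hB, hC,
      stmt4F_mk, stmt4f_x, stmt4f_y, stmt4f_z] at h0'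
    simp only [stmt4X, stmt4Y, stmt4Z, Matrix.mul_fin_three] at h0'
    have h0'' := congrFun (congrFun h0' 0) 2
    simp [Matrix.add_apply, Matrix.sub_apply] at h0''
    norm_num at h0''
  refine ⟨h1, h2, hprod, ?_⟩
  intro hd
  rcases mul_eq_zero.mp hprod with h | h
  · exact h1 h
  · exact h2 h
end

section
/- Let ζ be a primitive third root of unity in a field k. In the free algebra k⟨x,y,z⟩ modulo the two-sided ideal generated by x² + y² + z², xy + ζ² zx + ζ yz, and xz + ζ² yx + ζ zy, one has (ζ²x + y + z)(ζx + y + z) = 0, and both factors are nonzero; hence this quotient algebra is not a domain. -/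
open FreeAlgebra

/-- The relations `x² + y² + z²`, `xy + ζ²·zx + ζ·yz`, `xz + ζ²·yx + ζ·zy` in the free
algebra `k⟨x,y,z⟩`, where `x, y, z` are the generators `ι k 0, ι k 1, ι k 2`. -/
inductive rel5 (k : Type) [Field k] (ζ : k) :
    FreeAlgebra k (Fin 3) → FreeAlgebra k (Fin 3) → Prop
  | r1 : rel5 k ζ (ι k 0 * ι k 0 + ι k 1 * ι k 1 + ι k 2 * ι k 2) 0
  | r2 : rel5 k ζ (ι k 0 * ι k 1 + ζ ^ 2 • (ι k 2 * ι k 0) + ζ • (ι k 1 * ι k 2)) 0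
  | r3 : rel5 k ζ (ι k 0 * ι k 2 + ζ ^ 2 • (ι k 1 * ι k 0) + ζ • (ι k 2 * ι k 1)) 0

/-- Let `ζ` be a primitive third root of unity in a field `k`.  In
`k⟨x,y,z⟩/(x² + y² + z², xy + ζ²zx + ζyz, xz + ζ²yx + ζzy)` one has
`(ζ²x + y + z)(ζx + y + z) = 0` and both factors are nonzero; hence this quotient
algebra is not a domain. -/
theorem stmt5 (k : Type) [Field k] (ζ : k) (hζ : IsPrimitiveRoot ζ 3) :
    ((ζ ^ 2 • (RingQuot.mkAlgHom k (rel5 k ζ)) (ι k 0) +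
          (RingQuot.mkAlgHom k (rel5 k ζ)) (ι k 1) +
          (RingQuot.mkAlgHom k (rel5 k ζ)) (ι k 2)) *
        (ζ • (RingQuot.mkAlgHom k (rel5 k ζ)) (ι k 0) +
          (RingQuot.mkAlgHom k (rel5 k ζ)) (ι k 1) +
          (RingQuot.mkAlgHom k (rel5 k ζ)) (ι k 2)) = 0) ∧
    (ζ ^ 2 • (RingQuot.mkAlgHom k (rel5 k ζ)) (ι k 0) +
        (RingQuot.mkAlgHom k (rel5 k ζ)) (ι k 1) +
        (RingQuot.mkAlgHom k (rel5 k ζ)) (ι k 2) ≠ 0) ∧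
    (ζ • (RingQuot.mkAlgHom k (rel5 k ζ)) (ι k 0) +
        (RingQuot.mkAlgHom k (rel5 k ζ)) (ι k 1) +
        (RingQuot.mkAlgHom k (rel5 k ζ)) (ι k 2) ≠ 0) ∧
    ¬ IsDomain (RingQuot (rel5 k ζ)) := by
  set X := (RingQuot.mkAlgHom k (rel5 k ζ)) (ι k 0) with hX
  set Y := (RingQuot.mkAlgHom k (rel5 k ζ)) (ι k 1) with hY
  set Z := (RingQuot.mkAlgHom k (rel5 k ζ)) (ι k 2) with hZ
  have hζ3 : ζ ^ 3 = 1 := hζ.pow_eq_one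
  have hζ21 : ζ ^ 2 * ζ = 1 := by rw [← pow_succ]; exact hζ3
  have hζ22 : ζ ^ 2 * ζ ^ 2 = ζ := by
    have : ζ ^ 2 * ζ ^ 2 = ζ ^ 3 * ζ := by ring
    rw [this, hζ3, one_mul]
  have h1 : X * X + Y * Y + Z * Z = 0 := by
    have := RingQuot.mkAlgHom_rel k (rel5.r1 (k := k) (ζ := ζ))
    simpa using this
  have h2 : X * Y + ζ ^ 2 • (Z * X) + ζ • (Y * Z) = 0 := by
    have := RingQuot.mkAlgHom_rel k (rel5.r2 (k := k) (ζ := ζ))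
    simpa [map_add, map_mul, map_smul] using this
  have h3 : X * Z + ζ ^ 2 • (Y * X) + ζ • (Z * Y) = 0 := by
    have := RingQuot.mkAlgHom_rel k (rel5.r3 (k := k) (ζ := ζ))
    simpa [map_add, map_mul, map_smul] using this
  have hprod : (ζ ^ 2 • X + Y + Z) * (ζ • X + Y + Z) = 0 := by
    have key : (ζ ^ 2 • X + Y + Z) * (ζ • X + Y + Z) =
        (X * X + Y * Y + Z * Z) + ζ ^ 2 • (X * Y + ζ ^ 2 • (Z * X) + ζ • (Y * Z))
          + ζ ^ 2 • (X * Z + ζ ^ 2 • (Y * X) + ζ • (Z * Y)) := by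
      simp only [mul_add, add_mul, smul_add, smul_mul_assoc, mul_smul_comm, smul_smul,
        hζ21, hζ22, one_smul]
      match_scalars <;> (first | linear_combination hζ3 | ring)
    rw [key, h1, h2, h3, smul_zero, add_zero, add_zero]
  -- representation to dual numbers
  set f : FreeAlgebra k (Fin 3) →ₐ[k] DualNumber k :=
    FreeAlgebra.lift k (fun i => if i = 1 then DualNumber.eps else 0) with hf
  have hfrel : ∀ ⦃a b : FreeAlgebra k (Fin 3)⦄, rel5 k ζ a b → f a = f b := by
    intro a b h
    cases h <;> simp [hf, FreeAlgebra.lift_ι_apply, DualNumber.eps_mul_eps]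
  set φ : RingQuot (rel5 k ζ) →ₐ[k] DualNumber k :=
    RingQuot.liftAlgHom k ⟨f, hfrel⟩ with hφ
  have hφX : φ X = 0 := by
    rw [hX, hφ, RingQuot.liftAlgHom_mkAlgHom_apply]
    simp [hf, FreeAlgebra.lift_ι_apply]
  have hφY : φ Y = DualNumber.eps := by
    rw [hY, hφ, RingQuot.liftAlgHom_mkAlgHom_apply]
    simp [hf, FreeAlgebra.lift_ι_apply]
  have hφZ : φ Z = 0 := by
    rw [hZ, hφ, RingQuot.liftAlgHom_mkAlgHom_apply]
    simp [hf, FreeAlgebra.lift_ι_apply]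
  have heps : (DualNumber.eps : DualNumber k) ≠ 0 := by
    intro h
    have := congrArg TrivSqZeroExt.snd h
    simp at this
  have hne1 : ζ ^ 2 • X + Y + Z ≠ 0 := by
    intro h
    have := congrArg φ h
    rw [map_add, map_add, map_smul, hφX, hφY, hφZ, map_zero] at this
    simp at this
    exact heps this
  have hne2 : ζ • X + Y + Z ≠ 0 := by
    intro h
    have := congrArg φ h
    rw [map_add, map_add, map_smul, hφX, hφY, hφZ, map_zero] at this
    simp at this
    exact heps this
  refine ⟨hprod, hne1, hne2, ?_⟩
  intro hdom
  rcases mul_eq_zero.mp hprod with h | h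
  · exact hne1 h
  · exact hne2 h
end
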